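/- arXiv:physics/9703007 — 2 statements merged into one kernel-verified Lean document; each statement's English description precedes it below -/
import Mathlib

section
/- If X is a stable real random variable, so that for each n there exist a_n > 0 and b_n ∈ ℝ with X₁ + ⋯ + Xₙ =ᵈ a_n X + b_n for iid copies Xᵢ of X, and X is nondegenerate, then the norming constants satisfy a_n = n^{1/α} for some constant α ∈ (0, 2]. -/
/-!
Let `ρ = ‖charFun μ ·‖`. Stability gives `ρ (a n * t) = ρ t ^ n`, so `H = -log ρ` satisfies
`H (a n * t) = n * H t`. Since `H ≥ 0`, `H → 0` at `0` and `H` is not identically `0` (by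
nondegeneracy, through the symmetrization, whose characteristic function is `ρ ^ 2`), a dilation
that multiplies `H` by a larger factor is a larger dilation. Comparing `a n ^ k` with the powers of
`a 2` bracketing it then forces `a n = n ^ γ` with `γ = log (a 2) / log 2`. If `γ < 1/2`, then along
`t = s / n ^ γ` the quotient `(1 - ρ t ^ 2) / t ^ 2` tends to `0`; since `1 - cos u ≥ 2 u² / π²`
on `[-π, π]`, every truncated second moment of the symmetrization vanishes, so it is `δ₀` and `μ` is
a Dirac mass. Hence `α = 1 / γ ≤ 2`.
-/

open MeasureTheory

/-- The `n`-th convolution power of a measure on `ℝ`, with `ν^{*0} = δ₀`. -/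
noncomputable def convPow (ν : Measure ℝ) : ℕ → Measure ℝ
  | 0 => Measure.dirac 0
  | n + 1 => (convPow ν n).conv ν

open ProbabilityTheory Filter Topology Real Set

lemma nonpos_of_le_comp_mul {H : ℝ → ℝ} (hH : Tendsto H (𝓝 0) (𝓝 0)) {r : ℝ} (hr : |r| < 1)
    (hle : ∀ u, H u ≤ H (r * u)) (u : ℝ) : H u ≤ 0 := by
  have hiter : ∀ k : ℕ, H u ≤ H (r ^ k * u) := by
    intro k
    induction k with
    | zero => simp
    | succ k ih => exact ih.trans ((hle _).trans_eq (by rw [pow_succ', mul_assoc]))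
  have hlim : Tendsto (fun k : ℕ => r ^ k * u) atTop (𝓝 0) := by
    simpa using (tendsto_pow_atTop_nhds_zero_of_abs_lt_one hr).mul_const u
  exact ge_of_tendsto (hH.comp hlim) (Eventually.of_forall hiter)

def IsScaling (H : ℝ → ℝ) (c l : ℝ) : Prop := ∀ u, H (c * u) = l * H u

namespace IsScaling

variable {H : ℝ → ℝ}

lemma one : IsScaling H 1 1 := fun u => by simp

lemma pow {c l : ℝ} (h : IsScaling H c l) (k : ℕ) : IsScaling H (c ^ k) (l ^ k) := by
  induction k with
  | zero => exact one
  | succ k ih => intro u; rw [pow_succ, mul_assoc, ih, h, pow_succ, mul_assoc]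

variable {s c c' l l' : ℝ}

lemma le (hH : Tendsto H (𝓝 0) (𝓝 0)) (hH_nonneg : ∀ u, 0 ≤ H u) (hs : H s ≠ 0)
    (hc : 0 < c) (hc' : 0 < c') (h : IsScaling H c l) (h' : IsScaling H c' l') (hl : l ≤ l') :
    c ≤ c' := by
  by_contra! hlt
  have hr : |c' / c| < 1 := by
    rw [abs_of_pos (div_pos hc' hc)]
    exact (div_lt_one hc).2 hlt
  refine hs (le_antisymm (nonpos_of_le_comp_mul hH hr (fun w => ?_) s) (hH_nonneg s))
  calc H w = l * H (w / c) := by rw [← h, mul_div_cancel₀ _ hc.ne']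
    _ ≤ l' * H (w / c) := mul_le_mul_of_nonneg_right hl (hH_nonneg _)
    _ = H (c' / c * w) := by rw [← h']; congr 1; ring

lemma lt (hH : Tendsto H (𝓝 0) (𝓝 0)) (hH_nonneg : ∀ u, 0 ≤ H u) (hs : H s ≠ 0)
    (hc : 0 < c) (hc' : 0 < c') (h : IsScaling H c l) (h' : IsScaling H c' l') (hl : l < l') :
    c < c' := by
  refine (h.le hH hH_nonneg hs hc hc' h' hl.le).lt_of_ne ?_
  rintro rfl
  exact hl.ne (mul_right_cancel₀ hs ((h s).symm.trans (h' s)))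

end IsScaling

lemma eq_zero_of_forall_abs_natCast_mul_le {x C : ℝ} (h : ∀ k : ℕ, |k * x| ≤ C) : x = 0 := by
  by_contra hx
  obtain ⟨k, hk⟩ := exists_nat_gt (C / |x|)
  have hkx := h k
  rw [abs_mul, Nat.abs_cast, ← le_div_iff₀ (abs_pos.2 hx)] at hkx
  linarith

theorem exists_eq_rpow_of_isScaling {H : ℝ → ℝ} (hH : Tendsto H (𝓝 0) (𝓝 0))
    (hH_nonneg : ∀ u, 0 ≤ H u) {s : ℝ} (hs : H s ≠ 0) {a : ℕ → ℝ} (ha : ∀ n, 1 ≤ n → 0 < a n)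
    (haH : ∀ n, 1 ≤ n → IsScaling H (a n) n) :
    ∃ γ : ℝ, 0 < γ ∧ ∀ n, 1 ≤ n → a n = (n : ℝ) ^ γ := by
  have ha2 : 1 < a 2 :=
    IsScaling.one.lt hH hH_nonneg hs one_pos (ha 2 one_le_two) (haH 2 one_le_two) (by norm_num)
  set γ := log (a 2) / log 2 with hγ_def
  have hγ : 0 < γ := div_pos (log_pos ha2) (log_pos one_lt_two)
  have hL : log (a 2) = γ * log 2 := by rw [hγ_def, div_mul_cancel₀ _ (log_pos one_lt_two).ne']
  refine ⟨γ, hγ, fun n hn => ?_⟩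
  have hn0 : (0 : ℝ) < n := by exact_mod_cast hn
  have hbound : ∀ k : ℕ, |k * (log (a n) - log n * γ)| ≤ log (a 2) := by
    intro k
    set j := Nat.log 2 (n ^ k)
    have hj₁ : ((2 : ℕ) : ℝ) ^ j ≤ (n : ℝ) ^ k := by
      exact_mod_cast Nat.pow_log_le_self 2 (pow_ne_zero k (by omega))
    have hj₂ : (n : ℝ) ^ k ≤ ((2 : ℕ) : ℝ) ^ (j + 1) := by
      exact_mod_cast (Nat.lt_pow_succ_log_self one_lt_two (n ^ k)).le
    have hlow : a 2 ^ j ≤ a n ^ k :=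
      IsScaling.le hH hH_nonneg hs (pow_pos (ha 2 one_le_two) j) (pow_pos (ha n hn) k)
        ((haH 2 one_le_two).pow j) ((haH n hn).pow k) hj₁
    have hupp : a n ^ k ≤ a 2 ^ (j + 1) :=
      IsScaling.le hH hH_nonneg hs (pow_pos (ha n hn) k) (pow_pos (ha 2 one_le_two) (j + 1))
        ((haH n hn).pow k) ((haH 2 one_le_two).pow (j + 1)) hj₂
    have h₁ := log_le_log (pow_pos (ha 2 one_le_two) j) hlow
    have h₂ := log_le_log (pow_pos (ha n hn) k) hupp
    have h₃ := log_le_log (by positivity) hj₁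
    have h₄ := log_le_log (by positivity) hj₂
    simp only [log_pow, Nat.cast_ofNat, Nat.cast_add, Nat.cast_one] at h₁ h₂ h₃ h₄
    have h₃' := mul_le_mul_of_nonneg_left h₃ hγ.le
    have h₄' := mul_le_mul_of_nonneg_left h₄ hγ.le
    rw [abs_le]
    constructor <;> nlinarith
  have hlog : log (a n) = log n * γ := (sub_eq_zero.1 (eq_zero_of_forall_abs_natCast_mul_le hbound))
  rw [rpow_def_of_pos hn0, ← hlog, exp_log (ha n hn)]

theorem exists_eq_rpow_of_comp_mul_eq_pow {ρ : ℝ → ℝ} (hρ : ContinuousAt ρ 0) (hρ0 : ρ 0 = 1)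
    (hρ_nonneg : ∀ t, 0 ≤ ρ t) (hρ_le : ∀ t, ρ t ≤ 1) {s : ℝ} (hs : ρ s ∈ Ioo 0 1)
    {a : ℕ → ℝ} (ha : ∀ n, 1 ≤ n → 0 < a n) (hρa : ∀ n, 1 ≤ n → ∀ t, ρ (a n * t) = ρ t ^ n) :
    ∃ γ : ℝ, 0 < γ ∧ ∀ n, 1 ≤ n → a n = (n : ℝ) ^ γ := by
  -- `ρ` may vanish, and `log 0 = 0`; the scaling of `-log ρ` survives because
  -- `log (x ^ n) = n * log x` holds for every real `x`, and continuity is only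
  -- needed at `0`, where `ρ = 1`.
  refine exists_eq_rpow_of_isScaling (H := fun t => -log (ρ t)) ?_
    (fun t => neg_nonneg.2 (log_nonpos (hρ_nonneg t) (hρ_le t)))
    (neg_ne_zero.2 (log_neg hs.1 hs.2).ne) ha fun n hn t => ?_
  · simpa [hρ0] using (hρ.log (by simp [hρ0])).tendsto.neg
  · simp only [hρa n hn, log_pow]
    ring

instance isProbabilityMeasure_convPow (μ : Measure ℝ) [IsProbabilityMeasure μ] (n : ℕ) :
    IsProbabilityMeasure (convPow μ n) := by
  induction n with
  | zero => rw [convPow]; infer_instance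
  | succ n ih => rw [convPow]; infer_instance

lemma charFun_convPow (μ : Measure ℝ) [IsProbabilityMeasure μ] (n : ℕ) (t : ℝ) :
    charFun (convPow μ n) t = charFun μ t ^ n := by
  induction n with
  | zero => simp [convPow]
  | succ n ih => rw [convPow, charFun_conv, ih, pow_succ]

lemma norm_charFun_map_mul_add (μ : Measure ℝ) (c d t : ℝ) :
    ‖charFun (μ.map fun x => c * x + d) t‖ = ‖charFun μ (c * t)‖ := by
  rw [show (fun x => c * x + d) = (· + d) ∘ (c * ·) from rfl,
    ← Measure.map_map (by fun_prop) (by fun_prop), charFun_map_add_const, norm_mul,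
    Complex.norm_exp_ofReal_mul_I, mul_one, charFun_map_mul]

lemma re_charFun (ν : Measure ℝ) [IsFiniteMeasure ν] (t : ℝ) :
    (charFun ν t).re = ∫ x, cos (t * x) ∂ν := by
  rw [charFun_apply_real, ← RCLike.re_eq_complex_re, ← integral_re]
  · simp_rw [RCLike.re_eq_complex_re, ← Complex.ofReal_mul, Complex.exp_ofReal_mul_I_re]
  · exact Integrable.of_bound (by fun_prop) 1 (ae_of_all _ fun x => by
      rw [← Complex.ofReal_mul, Complex.norm_exp_ofReal_mul_I])

lemma setLIntegral_sq_le_one_sub_re_charFun (ν : Measure ℝ) [IsProbabilityMeasure ν] {t : ℝ}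
    (ht : t ≠ 0) :
    ∫⁻ x in {x | |t * x| ≤ π}, ENNReal.ofReal (x ^ 2) ∂ν
      ≤ ENNReal.ofReal (π ^ 2 / 2 * ((1 - (charFun ν t).re) / t ^ 2)) := by
  have hcos : Integrable (fun x => cos (t * x)) ν :=
    Integrable.of_bound (by fun_prop) 1 (ae_of_all _ fun x => abs_cos_le_one _)
  have hint : Integrable (fun x => π ^ 2 / (2 * t ^ 2) * (1 - cos (t * x))) ν :=
    ((integrable_const 1).sub hcos).const_mul _
  calc ∫⁻ x in {x | |t * x| ≤ π}, ENNReal.ofReal (x ^ 2) ∂ν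
      ≤ ∫⁻ x in {x | |t * x| ≤ π}, ENNReal.ofReal (π ^ 2 / (2 * t ^ 2) * (1 - cos (t * x))) ∂ν := by
        refine setLIntegral_mono' (measurableSet_le (by fun_prop) measurable_const)
          fun x hx => ENNReal.ofReal_le_ofReal ?_
        rw [div_mul_eq_mul_div, le_div_iff₀ (by positivity)]
        calc x ^ 2 * (2 * t ^ 2) = π ^ 2 * (2 / π ^ 2 * (t * x) ^ 2) := by field_simp
          _ ≤ π ^ 2 * (1 - cos (t * x)) := by gcongr; linarith [cos_le_one_sub_mul_cos_sq hx]
    _ ≤ ∫⁻ x, ENNReal.ofReal (π ^ 2 / (2 * t ^ 2) * (1 - cos (t * x))) ∂ν :=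
        setLIntegral_le_lintegral _ _
    _ = ENNReal.ofReal (π ^ 2 / 2 * ((1 - (charFun ν t).re) / t ^ 2)) := by
        rw [← ofReal_integral_eq_lintegral_ofReal hint (ae_of_all _ fun x => by
          have := cos_le_one (t * x); positivity), integral_const_mul,
          integral_sub (integrable_const 1) hcos, re_charFun]
        congr 1
        simp
        ring

theorem eq_dirac_zero_of_tendsto_one_sub_re_charFun_div_sq {ι : Type*} {l : Filter ι} [l.NeBot]
    (ν : Measure ℝ) [IsProbabilityMeasure ν] {t : ι → ℝ} (ht : Tendsto t l (𝓝[≠] 0))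
    (h : Tendsto (fun i => (1 - (charFun ν (t i)).re) / t i ^ 2) l (𝓝 0)) :
    ν = Measure.dirac 0 := by
  obtain ⟨ht0, ht_ne⟩ := tendsto_nhdsWithin_iff.1 ht
  have htrunc : ∀ R > 0, ∫⁻ x in {x | |x| ≤ R}, ENNReal.ofReal (x ^ 2) ∂ν = 0 := by
    intro R hR
    have hlim : Tendsto
        (fun i => ENNReal.ofReal (π ^ 2 / 2 * ((1 - (charFun ν (t i)).re) / t i ^ 2))) l (𝓝 0) := by
      simpa using ENNReal.tendsto_ofReal (h.const_mul (π ^ 2 / 2))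
    have hsmall : ∀ᶠ i in l, |t i| ≤ π / R := by
      simpa using ht0.abs.eventually (eventually_le_nhds (by simpa using div_pos pi_pos hR))
    refine le_antisymm (ge_of_tendsto hlim ?_) bot_le
    filter_upwards [hsmall, ht_ne] with i hi hi0
    refine (lintegral_mono_set fun x (hx : |x| ≤ R) => ?_).trans
      (setLIntegral_sq_le_one_sub_re_charFun ν hi0)
    calc |t i * x| = |t i| * |x| := abs_mul _ _
      _ ≤ π / R * R := by gcongr
      _ = π := div_mul_cancel₀ _ hR.ne'
  have hae : ∀ᵐ x ∂ν, x = 0 := by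
    have hball : ∀ n : ℕ, ∀ᵐ x ∂ν, |x| ≤ (n : ℝ) + 1 → x = 0 := by
      intro n
      have hS : MeasurableSet {x : ℝ | |x| ≤ n + 1} :=
        measurableSet_le (by fun_prop) measurable_const
      have h0 := (lintegral_eq_zero_iff (by fun_prop)).1 (htrunc (n + 1) (by positivity))
      filter_upwards [(ae_restrict_iff' hS).1 h0] with x hx hxn
      simpa [ENNReal.ofReal_eq_zero] using hx hxn
    filter_upwards [ae_all_iff.2 hball] with x hx
    obtain ⟨n, hn⟩ := exists_nat_ge |x|
    exact hx n (by linarith)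
  simpa using (hasLaw_dirac_of_ae_eq (X := id) hae).map_eq

noncomputable def symmetrization (μ : Measure ℝ) : Measure ℝ :=
  (μ.prod μ).map fun p => p.1 - p.2

instance isProbabilityMeasure_symmetrization (μ : Measure ℝ) [IsProbabilityMeasure μ] :
    IsProbabilityMeasure (symmetrization μ) :=
  Measure.isProbabilityMeasure_map (by fun_prop)

lemma charFun_symmetrization (μ : Measure ℝ) [IsProbabilityMeasure μ] (t : ℝ) :
    charFun (symmetrization μ) t = (‖charFun μ t‖ : ℂ) ^ 2 := by
  have hsplit : ∀ p : ℝ × ℝ, Complex.exp (t * ↑(p.1 - p.2) * Complex.I)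
      = Complex.exp (t * p.1 * Complex.I) * Complex.exp (↑(-t) * p.2 * Complex.I) := by
    intro p
    rw [← Complex.exp_add]
    push_cast
    ring_nf
  rw [symmetrization, charFun_apply_real, integral_map (by fun_prop) (by fun_prop)]
  simp_rw [hsplit]
  rw [integral_prod_mul (fun x : ℝ => Complex.exp (t * x * Complex.I))
    (fun y : ℝ => Complex.exp (↑(-t) * y * Complex.I)), ← charFun_apply_real, ← charFun_apply_real,
    charFun_neg, Complex.mul_conj']

lemma exists_eq_dirac_of_symmetrization_eq_dirac (μ : Measure ℝ) [IsProbabilityMeasure μ]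
    (h : symmetrization μ = Measure.dirac 0) : ∃ c, μ = Measure.dirac c := by
  have hlaw : HasLaw (fun p : ℝ × ℝ => p.1 - p.2) (Measure.dirac 0) (μ.prod μ) := ⟨by fun_prop, h⟩
  obtain ⟨c, hc⟩ := (Measure.ae_ae_of_ae_prod hlaw.ae_eq_of_dirac).exists
  refine ⟨c, ?_⟩
  simpa using (hasLaw_dirac_of_ae_eq (X := id)
    (hc.mono fun y (hy : c - y = 0) => (sub_eq_zero.1 hy).symm)).map_eq

lemma exists_norm_charFun_mem_Ioo (μ : Measure ℝ) [IsProbabilityMeasure μ]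
    (hμ : ¬ ∃ c, μ = Measure.dirac c) : ∃ t, ‖charFun μ t‖ ∈ Ioo 0 1 := by
  obtain ⟨t₀, ht₀⟩ : ∃ t, ‖charFun μ t‖ < 1 := by
    by_contra! h
    refine hμ (exists_eq_dirac_of_symmetrization_eq_dirac μ
      (Measure.ext_of_charFun (funext fun t => ?_)))
    rw [charFun_symmetrization, le_antisymm (norm_charFun_le_one t) (h t), charFun_dirac]
    simp
  have hcont : Continuous fun t => ‖charFun μ t‖ := continuous_charFun.norm
  have hmid : (1 + ‖charFun μ t₀‖) / 2 ∈ uIcc ‖charFun μ 0‖ ‖charFun μ t₀‖ := by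
    rw [mem_uIcc]
    right
    simp only [charFun_zero, probReal_univ, Complex.ofReal_one, norm_one]
    constructor <;> linarith
  obtain ⟨t, -, ht⟩ := intermediate_value_uIcc hcont.continuousOn hmid
  refine ⟨t, ?_⟩
  simp only at ht
  rw [ht]
  constructor <;> linarith [norm_nonneg (charFun μ t₀)]

lemma one_sub_sq_le_of_pow_eq {ρ r : ℝ} {k : ℕ} (hk : 1 ≤ k) (hρ : 0 ≤ ρ) (hr : 0 < r)
    (h : ρ ^ k = r) : 1 - ρ ^ 2 ≤ -2 * log r / k := by
  have hk0 : (0 : ℝ) < k := by exact_mod_cast hk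
  have hρ_pos : 0 < ρ := lt_of_pow_lt_pow_left₀ k hρ (by rwa [h, zero_pow (by omega)])
  have hlog := log_le_sub_one_of_pos (pow_pos hρ_pos 2)
  rw [log_pow, Nat.cast_ofNat] at hlog
  rw [le_div_iff₀ hk0, ← h, log_pow]
  nlinarith [mul_le_mul_of_nonneg_left hlog hk0.le]

theorem half_le_of_norm_charFun_rpow_mul (μ : Measure ℝ) [IsProbabilityMeasure μ]
    (hμ : ¬ ∃ c, μ = Measure.dirac c) {γ s : ℝ} (hγ : 0 < γ) (hs : ‖charFun μ s‖ ∈ Ioo 0 1)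
    (hscale : ∀ n : ℕ, 1 ≤ n → ∀ t, ‖charFun μ ((n : ℝ) ^ γ * t)‖ = ‖charFun μ t‖ ^ n) :
    1 / 2 ≤ γ := by
  by_contra! hγ2
  have hs0 : s ≠ 0 := by
    rintro rfl
    simp at hs
  set C := -2 * log ‖charFun μ s‖ / s ^ 2
  set t : ℕ → ℝ := fun k => s / (k : ℝ) ^ γ
  have hbound : ∀ k : ℕ, 1 ≤ k → 0 ≤ (1 - (charFun (symmetrization μ) (t k)).re) / t k ^ 2 ∧
      (1 - (charFun (symmetrization μ) (t k)).re) / t k ^ 2 ≤ C * (k : ℝ) ^ (2 * γ - 1) := by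
    intro k hk
    have hk0 : (0 : ℝ) < k := by exact_mod_cast hk
    have hre : (charFun (symmetrization μ) (t k)).re = ‖charFun μ (t k)‖ ^ 2 := by
      rw [charFun_symmetrization, ← Complex.ofReal_pow, Complex.ofReal_re]
    have hρ2 := one_sub_sq_le_of_pow_eq hk (norm_nonneg _) hs.1
      (by rw [← hscale k hk, mul_div_cancel₀ _ (rpow_pos_of_pos hk0 γ).ne'])
    have hpow : (k : ℝ) ^ (2 * γ - 1) = ((k : ℝ) ^ γ) ^ 2 / k := by
      rw [rpow_sub hk0, rpow_one, mul_comm, rpow_mul hk0.le, rpow_two]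
    rw [hre, hpow]
    refine ⟨div_nonneg (sub_nonneg.2 (pow_le_one₀ (norm_nonneg _) (norm_charFun_le_one _)))
      (sq_nonneg _), ?_⟩
    calc (1 - ‖charFun μ (t k)‖ ^ 2) / t k ^ 2 ≤ (-2 * log ‖charFun μ s‖ / k) / t k ^ 2 := by
          gcongr
      _ = C * (((k : ℝ) ^ γ) ^ 2 / k) := by simp only [t, C]; field_simp
  refine hμ (exists_eq_dirac_of_symmetrization_eq_dirac μ
    (eq_dirac_zero_of_tendsto_one_sub_re_charFun_div_sq (l := atTop) _ (t := t) ?_ ?_))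
  · refine tendsto_nhdsWithin_iff.2 ⟨tendsto_const_nhds.div_atTop
      ((tendsto_rpow_atTop hγ).comp tendsto_natCast_atTop_atTop), ?_⟩
    filter_upwards [eventually_ge_atTop 1] with k hk
    exact div_ne_zero hs0 (rpow_pos_of_pos (by exact_mod_cast hk) γ).ne'
  · have hlim : Tendsto (fun k : ℕ => C * (k : ℝ) ^ (2 * γ - 1)) atTop (𝓝 0) := by
      have h := (tendsto_rpow_neg_atTop (by linarith : 0 < 1 - 2 * γ)).comp
        tendsto_natCast_atTop_atTop
      simpa [Function.comp_def] using h.const_mul C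
    exact squeeze_zero' ((eventually_ge_atTop 1).mono fun k hk => (hbound k hk).1)
      ((eventually_ge_atTop 1).mono fun k hk => (hbound k hk).2) hlim

/-- for a nondegenerate stable law, the norming constants satisfy
`a_n = n^{1/α}` for some `α ∈ (0,2]`. -/
theorem stable_norming_constants
    (μ : Measure ℝ) [IsProbabilityMeasure μ]
    (hnondeg : ¬ ∃ c : ℝ, μ = Measure.dirac c)
    (a b : ℕ → ℝ)
    (hstable : ∀ n : ℕ, 1 ≤ n → 0 < a n ∧
      convPow μ n = μ.map (fun x => a n * x + b n)) :
    ∃ α : ℝ, 0 < α ∧ α ≤ 2 ∧ ∀ n : ℕ, 1 ≤ n → a n = (n : ℝ) ^ ((1 : ℝ) / α) := by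
  obtain ⟨s, hs⟩ := exists_norm_charFun_mem_Ioo μ hnondeg
  have hscale : ∀ n, 1 ≤ n → ∀ t, ‖charFun μ (a n * t)‖ = ‖charFun μ t‖ ^ n := fun n hn t => by
    rw [← norm_charFun_map_mul_add μ (a n) (b n), ← (hstable n hn).2, charFun_convPow, norm_pow]
  obtain ⟨γ, hγ, ha⟩ := exists_eq_rpow_of_comp_mul_eq_pow continuous_charFun.norm.continuousAt
    (by simp) (fun t => norm_nonneg _) norm_charFun_le_one hs (fun n hn => (hstable n hn).1) hscale
  have hγ2 : 1 / 2 ≤ γ := half_le_of_norm_charFun_rpow_mul μ hnondeg hγ hs fun n hn t => by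
    rw [← ha n hn, hscale n hn]
  refine ⟨1 / γ, by positivity, ?_, fun n hn => by rw [one_div_one_div, ha n hn]⟩
  rw [div_le_iff₀ hγ]
  linarith
end

section
/- For v > 0, the integral ∫₀^∞ (e^{-vx} - 1 + vx·1_{x≤1}) x^{-2} dx converges and equals v·ln v + C·v for an explicit constant C (involving the Euler–Mascheroni constant γ: C = γ - 1); i.e. the α = 1 one-sided stable case produces a v ln v singularity. -/
/-!
Put `F x = (1 - e^{-vx}) / x - v e^{-vx} log x`, so that `F' = (e^{-vx} - 1) / x² + v² log x e^{-vx}`.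
On `(1, ∞)` this is the integrand plus `v² log x e^{-vx}`; on `(0, 1]` the compensator `vx` adds
`v / x`, so the primitive there is `F + v log`. As `F → 0` at `∞` and `F + v log → v` at `0⁺`, the
two pieces sum to `(F 1 - v) - F 1 = -v`, i.e. the integral equals `-v - v² ∫₀^∞ log x e^{-vx} dx`.
Substituting `t = vx`, that last integral is `(Γ'(1) - log v) / v = -(γ + log v) / v`.
-/

open MeasureTheory Set Filter Real
open scoped Topology

theorem integral_log_mul_exp_neg :
    ∫ t in Ioi (0 : ℝ), log t * exp (-t) = -eulerMascheroniConstant := by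
  have hΓ : HasDerivAt Complex.GammaIntegral
      (∫ t : ℝ in Ioi 0, (t : ℂ) ^ ((1 : ℂ) - 1) * (log t * exp (-t))) 1 :=
    Complex.hasDerivAt_GammaIntegral (by norm_num)
  have hγ : HasDerivAt Complex.GammaIntegral (-(eulerMascheroniConstant : ℂ)) 1 := by
    refine Complex.hasDerivAt_Gamma_one.congr_of_eventuallyEq ?_
    filter_upwards [(isOpen_lt continuous_const Complex.continuous_re).mem_nhds
      (by norm_num : (0 : ℝ) < (1 : ℂ).re)] with s hs
    exact (Complex.Gamma_eq_integral hs).symm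
  have h := hΓ.unique hγ
  simp only [sub_self, Complex.cpow_zero, one_mul, ← Complex.ofReal_mul] at h
  exact_mod_cast h

theorem abs_log_le_two_mul_rpow_add {x : ℝ} (hx : 0 < x) :
    |log x| ≤ 2 * (x ^ (-(1 / 2) : ℝ) + x ^ (1 / 2 : ℝ)) := by
  have hpos := log_le_rpow_div hx.le (by norm_num : (0 : ℝ) < 1 / 2)
  have hneg := log_le_rpow_div (inv_nonneg.mpr hx.le) (by norm_num : (0 : ℝ) < 1 / 2)
  rw [log_inv, inv_rpow hx.le, ← rpow_neg hx.le] at hneg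
  rw [abs_le]
  constructor <;> nlinarith [rpow_pos_of_pos hx (-(1 / 2) : ℝ), rpow_pos_of_pos hx (1 / 2 : ℝ)]

theorem exp_neg_sub_one_add_le_sq {t : ℝ} (ht : 0 ≤ t) : exp (-t) - 1 + t ≤ t ^ 2 := by
  -- `e^{-t} - 1 + t ≤ t (1 - e^{-t}) ≤ t²`, using `1 + t ≤ eᵗ` and `1 - t ≤ e^{-t}`
  have hgrowth := add_one_le_exp t
  have hdecay := add_one_le_exp (-t)
  have hinv : exp (-t) * exp t = 1 := by rw [← exp_add, neg_add_cancel, exp_zero]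
  nlinarith [exp_pos (-t)]

section

variable {v : ℝ}

theorem integrableOn_log_mul_exp_neg_mul (hv : 0 < v) :
    IntegrableOn (fun x => log x * exp (-(v * x))) (Ioi 0) := by
  have hdom : IntegrableOn
      (fun x : ℝ => 2 * (x ^ (-(1 / 2) : ℝ) * exp (-v * x ^ (1 : ℝ))
        + x ^ (1 / 2 : ℝ) * exp (-v * x ^ (1 : ℝ)))) (Ioi 0) :=
    ((integrableOn_rpow_mul_exp_neg_mul_rpow (by norm_num) one_pos hv).add
      (integrableOn_rpow_mul_exp_neg_mul_rpow (by norm_num) one_pos hv)).const_mul 2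
  refine hdom.mono' (by fun_prop) ?_
  filter_upwards [ae_restrict_mem measurableSet_Ioi] with x hx
  rw [norm_mul, norm_of_nonneg (exp_pos _).le, rpow_one, neg_mul, ← add_mul, ← mul_assoc]
  exact mul_le_mul_of_nonneg_right (abs_log_le_two_mul_rpow_add hx) (exp_pos _).le

theorem integral_log_mul_exp_neg_mul (hv : 0 < v) :
    ∫ x in Ioi 0, log x * exp (-(v * x)) = -(eulerMascheroniConstant + log v) / v := by
  have hscale := integral_comp_mul_left_Ioi (fun t => log t * exp (-t)) 0 hv
  simp only [mul_zero, smul_eq_mul, integral_log_mul_exp_neg] at hscale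
  have hsplit : ∫ x in Ioi 0, log (v * x) * exp (-(v * x))
      = log v * (∫ x in Ioi 0, exp (-(v * x))) + ∫ x in Ioi 0, log x * exp (-(v * x)) := by
    rw [← integral_const_mul, ← integral_add]
    · refine setIntegral_congr_fun measurableSet_Ioi fun x hx => ?_
      rw [log_mul hv.ne' (ne_of_gt hx)]
      ring
    · simpa using (exp_neg_integrableOn_Ioi 0 hv).const_mul (log v)
    · exact integrableOn_log_mul_exp_neg_mul hv
  have hexp : ∫ x in Ioi 0, exp (-(v * x)) = v⁻¹ := by
    simpa using integral_exp_mul_Ioi (neg_lt_zero.mpr hv) 0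
  rw [hsplit, hexp] at hscale
  field_simp at hscale ⊢
  linarith

/-- The integrand of the Lévy–Khintchine exponent of the one-sided `1`-stable law, whose Lévy
measure is `x⁻² dx` on `(0, ∞)`. -/
noncomputable def stableOneIntegrand (v x : ℝ) : ℝ :=
  (exp (-(v * x)) - 1 + if x ≤ 1 then v * x else 0) * x ^ (-2 : ℝ)

theorem stableOneIntegrand_of_le {x : ℝ} (hx : 0 < x) (hx1 : x ≤ 1) :
    stableOneIntegrand v x = (exp (-(v * x)) - 1 + v * x) / x ^ 2 := by
  rw [stableOneIntegrand, if_pos hx1, rpow_neg hx.le, rpow_two, div_eq_mul_inv]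

theorem stableOneIntegrand_of_one_lt {x : ℝ} (hx : 1 < x) :
    stableOneIntegrand v x = (exp (-(v * x)) - 1) / x ^ 2 := by
  rw [stableOneIntegrand, if_neg hx.not_ge, add_zero, rpow_neg (by linarith), rpow_two,
    div_eq_mul_inv]

theorem measurable_stableOneIntegrand : Measurable (stableOneIntegrand v) := by
  exact ((by fun_prop : Measurable fun x => exp (-(v * x)) - 1).add
    (Measurable.ite measurableSet_Iic (by fun_prop) measurable_const)).mul (by fun_prop)

theorem integrableOn_Ioc_stableOneIntegrand (hv : 0 ≤ v) :
    IntegrableOn (stableOneIntegrand v) (Ioc 0 1) := by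
  refine (integrable_const (v ^ 2)).mono' measurable_stableOneIntegrand.aestronglyMeasurable ?_
  filter_upwards [ae_restrict_mem measurableSet_Ioc] with x ⟨hx, hx1⟩
  have hlow : 0 ≤ exp (-(v * x)) - 1 + v * x := by linarith [add_one_le_exp (-(v * x))]
  rw [stableOneIntegrand_of_le hx hx1, norm_of_nonneg (by positivity), div_le_iff₀ (by positivity)]
  calc exp (-(v * x)) - 1 + v * x ≤ (v * x) ^ 2 := exp_neg_sub_one_add_le_sq (by positivity)
    _ = v ^ 2 * x ^ 2 := by ring

theorem integrableOn_Ioi_stableOneIntegrand (hv : 0 ≤ v) :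
    IntegrableOn (stableOneIntegrand v) (Ioi 1) := by
  refine (integrableOn_Ioi_rpow_of_lt (by norm_num : (-2 : ℝ) < -1) one_pos).mono'
    measurable_stableOneIntegrand.aestronglyMeasurable ?_
  filter_upwards [ae_restrict_mem measurableSet_Ioi] with x (hx : 1 < x)
  have hexp : exp (-(v * x)) ≤ 1 := exp_le_one_iff.mpr (by nlinarith)
  rw [stableOneIntegrand, if_neg hx.not_ge, add_zero, norm_mul,
    norm_of_nonneg (rpow_nonneg (by linarith) _)]
  refine mul_le_of_le_one_left (rpow_nonneg (by linarith) _) ?_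
  rw [norm_eq_abs, abs_le]
  constructor <;> linarith [exp_pos (-(v * x))]

theorem hasDerivAt_one_sub_exp_neg_mul_div_sub {x : ℝ} (hx : x ≠ 0) :
    HasDerivAt (fun x => (1 - exp (-(v * x))) / x - v * exp (-(v * x)) * log x)
      ((exp (-(v * x)) - 1) / x ^ 2 + v ^ 2 * (log x * exp (-(v * x)))) x := by
  have hexp : HasDerivAt (fun x => exp (-(v * x))) (-v * exp (-(v * x))) x := by
    simpa [mul_comm] using ((hasDerivAt_id x).const_mul v).neg.exp
  refine (((hexp.const_sub 1).div (hasDerivAt_id x) hx).sub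
    ((hexp.const_mul v).mul (hasDerivAt_log hx))).congr_deriv ?_
  simp only [id]
  field_simp
  ring

theorem tendsto_one_sub_exp_neg_mul_div_sub_add_nhdsGT_zero :
    Tendsto (fun x => (1 - exp (-(v * x))) / x - v * exp (-(v * x)) * log x + v * log x)
      (𝓝[>] 0) (𝓝 v) := by
  have hslope : Tendsto (fun x => (1 - exp (-(v * x))) / x) (𝓝[>] 0) (𝓝 v) := by
    have hexp : HasDerivAt (fun x => 1 - exp (-(v * x))) v 0 := by
      simpa using (((hasDerivAt_id (0 : ℝ)).const_mul v).neg.exp).const_sub 1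
    simpa [div_eq_inv_mul] using hexp.tendsto_slope_zero_right
  have hlog : Tendsto (fun x => log x * x) (𝓝[>] 0) (𝓝 0) := by
    simpa using tendsto_log_mul_rpow_nhdsGT_zero one_pos
  have := hslope.mul ((hlog.const_mul v).const_add 1)
  rw [mul_zero, add_zero, mul_one] at this
  refine this.congr' ?_
  filter_upwards [self_mem_nhdsWithin] with x (hx : 0 < x)
  field_simp
  ring

theorem tendsto_one_sub_exp_neg_mul_div_sub_atTop (hv : 0 < v) :
    Tendsto (fun x => (1 - exp (-(v * x))) / x - v * exp (-(v * x)) * log x) atTop (𝓝 0) := by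
  have hexp : Tendsto (fun x => exp (-(v * x))) atTop (𝓝 0) :=
    tendsto_exp_atBot.comp (tendsto_neg_atTop_atBot.comp (tendsto_id.const_mul_atTop hv))
  have hfirst : Tendsto (fun x => (1 - exp (-(v * x))) / x) atTop (𝓝 0) := by
    simpa [div_eq_mul_inv] using (hexp.const_sub 1).mul tendsto_inv_atTop_zero
  have hsecond : Tendsto (fun x => log x / x * (x ^ (1 : ℝ) * exp (-v * x))) atTop (𝓝 0) := by
    simpa using isLittleO_log_id_atTop.tendsto_div_nhds_zero.mul
      (tendsto_rpow_mul_exp_neg_mul_atTop_nhds_zero 1 v hv)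
  have := hfirst.sub (hsecond.const_mul v)
  rw [mul_zero, sub_zero] at this
  refine this.congr' ?_
  filter_upwards [eventually_gt_atTop 0] with x hx
  rw [rpow_one]
  field_simp

theorem integral_Ioc_stableOneIntegrand_add (hv : 0 < v) :
    ∫ x in Ioc 0 1, (stableOneIntegrand v x + v ^ 2 * (log x * exp (-(v * x))))
      = 1 - exp (-v) - v := by
  have hderiv : ∀ x ∈ Ioo (0 : ℝ) 1,
      HasDerivAt (fun x => (1 - exp (-(v * x))) / x - v * exp (-(v * x)) * log x + v * log x)
        (stableOneIntegrand v x + v ^ 2 * (log x * exp (-(v * x)))) x := by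
    intro x ⟨hx, hx1⟩
    refine ((hasDerivAt_one_sub_exp_neg_mul_div_sub hx.ne').add
      ((hasDerivAt_log hx.ne').const_mul v)).congr_deriv ?_
    rw [stableOneIntegrand_of_le hx hx1.le]
    field_simp
    ring
  have hint : IntervalIntegrable
      (fun x => stableOneIntegrand v x + v ^ 2 * (log x * exp (-(v * x)))) volume 0 1 :=
    (intervalIntegrable_iff_integrableOn_Ioc_of_le zero_le_one).mpr
      ((integrableOn_Ioc_stableOneIntegrand hv.le).add
        (((integrableOn_log_mul_exp_neg_mul hv).mono_set Ioc_subset_Ioi_self).const_mul _))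
  have hone : ContinuousAt
      (fun x => (1 - exp (-(v * x))) / x - v * exp (-(v * x)) * log x + v * log x) 1 :=
    ((hasDerivAt_one_sub_exp_neg_mul_div_sub one_ne_zero).add
      ((hasDerivAt_log one_ne_zero).const_mul v)).continuousAt
  rw [← intervalIntegral.integral_of_le zero_le_one,
    intervalIntegral.integral_eq_sub_of_hasDerivAt_of_tendsto one_pos hderiv hint
      tendsto_one_sub_exp_neg_mul_div_sub_add_nhdsGT_zero
      (by simpa using hone.tendsto.mono_left nhdsWithin_le_nhds)]

theorem integral_Ioi_stableOneIntegrand_add (hv : 0 < v) :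
    ∫ x in Ioi 1, (stableOneIntegrand v x + v ^ 2 * (log x * exp (-(v * x))))
      = exp (-v) - 1 := by
  have hderiv : ∀ x ∈ Ioi (1 : ℝ),
      HasDerivAt (fun x => (1 - exp (-(v * x))) / x - v * exp (-(v * x)) * log x)
        (stableOneIntegrand v x + v ^ 2 * (log x * exp (-(v * x)))) x := fun x hx => by
    rw [stableOneIntegrand_of_one_lt hx]
    exact hasDerivAt_one_sub_exp_neg_mul_div_sub (by linarith [mem_Ioi.mp hx])
  have hint : IntegrableOn
      (fun x => stableOneIntegrand v x + v ^ 2 * (log x * exp (-(v * x)))) (Ioi 1) :=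
    (integrableOn_Ioi_stableOneIntegrand hv.le).add
      (((integrableOn_log_mul_exp_neg_mul hv).mono_set (Ioi_subset_Ioi zero_le_one)).const_mul _)
  rw [integral_Ioi_of_hasDerivAt_of_tendsto
    (hasDerivAt_one_sub_exp_neg_mul_div_sub one_ne_zero).continuousAt.continuousWithinAt
    hderiv hint (tendsto_one_sub_exp_neg_mul_div_sub_atTop hv)]
  simp

end

/-- the `α = 1` one-sided stable case: for `v > 0`,
`∫₀^∞ (e^{-vx} - 1 + vx·1_{x≤1}) x^{-2} dx = v ln v + (γ - 1) v`,
where `γ` is the Euler–Mascheroni constant. -/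
theorem integral_alpha_one_v_log_v
    (v : ℝ) (hv : 0 < v) :
    IntegrableOn
      (fun x : ℝ => (Real.exp (-(v * x)) - 1 + (if x ≤ 1 then v * x else 0)) * x ^ (-2 : ℝ))
      (Set.Ioi 0) ∧
    (∫ x in Set.Ioi (0 : ℝ),
        (Real.exp (-(v * x)) - 1 + (if x ≤ 1 then v * x else 0)) * x ^ (-2 : ℝ)) =
      v * Real.log v + (Real.eulerMascheroniConstant - 1) * v := by
  have hsplit : Ioc (0 : ℝ) 1 ∪ Ioi 1 = Ioi 0 := Ioc_union_Ioi_eq_Ioi zero_le_one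
  have hint : IntegrableOn (stableOneIntegrand v) (Ioi 0) := hsplit ▸
    (integrableOn_Ioc_stableOneIntegrand hv.le).union (integrableOn_Ioi_stableOneIntegrand hv.le)
  refine ⟨hint, ?_⟩
  have hlog := (integrableOn_log_mul_exp_neg_mul hv).const_mul (v ^ 2)
  have htotal : ∫ x in Ioi 0, (stableOneIntegrand v x + v ^ 2 * (log x * exp (-(v * x)))) = -v := by
    rw [← hsplit, setIntegral_union (Ioc_disjoint_Ioi le_rfl) measurableSet_Ioi,
      integral_Ioc_stableOneIntegrand_add hv, integral_Ioi_stableOneIntegrand_add hv]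
    · ring
    · exact (hint.add hlog).mono_set Ioc_subset_Ioi_self
    · exact (hint.add hlog).mono_set (Ioi_subset_Ioi zero_le_one)
  rw [integral_add hint hlog, integral_const_mul, integral_log_mul_exp_neg_mul hv] at htotal
  change ∫ x in Ioi 0, stableOneIntegrand v x = _
  field_simp at htotal
  linarith
end
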